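/- arXiv:2302.13551 — 2 statements merged into one kernel-verified Lean document; each statement's English description precedes it below -/
import Mathlib

section
/- Every sequence of 2d - 1 elements of the group C_d \times C_d = (\mathbb{Z}/d) \times (\mathbb{Z}/d), for d \ge 1, contains a nonempty subsequence whose sum is zero; i.e., the Davenport constant of (\mathbb{Z}/d)^2 is at most 2d - 1. -/
open Finset MvPolynomial



lemma olson_prime {ι : Type} [DecidableEq ι] (p r : ℕ) (hp : p.Prime) (s : Finset ι)
    (hs : r * (p - 1) + 1 ≤ s.card) (c : Fin r → ι → ℤ) :
    ∃ T ⊆ s, T.Nonempty ∧ ∀ j : Fin r, (p : ℤ) ∣ ∑ i ∈ T, c j i := by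
  haveI : Fact p.Prime := ⟨hp⟩
  set f : Fin r → MvPolynomial ↥s (ZMod p) :=
    fun j => ∑ i : ↥s, (C ((c j i : ℤ) : ZMod p)) * X i ^ (p - 1) with hf
  have hdeg : ∀ j, (f j).totalDegree ≤ p - 1 := by
    intro j
    refine le_trans (totalDegree_finset_sum _ _) ?_
    apply Finset.sup_le
    intro i _
    refine le_trans (totalDegree_mul _ _) ?_
    rw [totalDegree_C, totalDegree_X_pow]
    omega
  have hsum : ∑ j : Fin r, (f j).totalDegree < Fintype.card ↥s := by
    have h1 : ∑ j : Fin r, (f j).totalDegree ≤ r * (p - 1) := by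
      calc ∑ j : Fin r, (f j).totalDegree ≤ ∑ _j : Fin r, (p - 1) :=
            Finset.sum_le_sum fun j _ => hdeg j
        _ = r * (p - 1) := by simp [mul_comm]
    have hcard : Fintype.card ↥s = s.card := Fintype.card_coe s
    omega
  have hdvd : p ∣ Fintype.card { x : ↥s → ZMod p // ∀ j : Fin r, eval x (f j) = 0 } := by
    convert char_dvd_card_solutions_of_fintype_sum_lt p hsum using 2
  have hppos : 0 < p - 1 := by have := hp.two_le; omega
  have h0 : ∀ j : Fin r, eval (0 : ↥s → ZMod p) (f j) = 0 := by
    intro j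
    simp [hf, zero_pow hppos.ne']
  have hpos : 0 < Fintype.card { x : ↥s → ZMod p // ∀ j, eval x (f j) = 0 } :=
    Fintype.card_pos_iff.mpr ⟨⟨0, h0⟩⟩
  have h2 : 1 < Fintype.card { x : ↥s → ZMod p // ∀ j, eval x (f j) = 0 } := by
    have := Nat.le_of_dvd hpos hdvd
    have := hp.two_le
    omega
  obtain ⟨x, hx⟩ := Fintype.exists_ne_of_one_lt_card h2 ⟨0, h0⟩
  have hy : x.1 ≠ 0 := fun h => hx (Subtype.ext h)
  set y := x.1 with hyy
  set T : Finset ι := (Finset.univ.filter fun i : ↥s => y i ≠ 0).image Subtype.val with hT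
  have hkey : ∀ j : Fin r, ∑ i ∈ T, ((c j i : ℤ) : ZMod p) = 0 := by
    intro j
    have e1 : ∑ i ∈ T, ((c j i : ℤ) : ZMod p)
        = ∑ i ∈ Finset.univ.filter (fun i : ↥s => y i ≠ 0), ((c j i.1 : ℤ) : ZMod p) := by
      rw [hT, Finset.sum_image]
      intro i _ i' _ h
      exact Subtype.ext h
    have e2 : ∑ i ∈ Finset.univ.filter (fun i : ↥s => y i ≠ 0), ((c j i.1 : ℤ) : ZMod p)
        = eval y (f j) := by
      rw [hf]
      simp only [map_sum, eval_mul, eval_C, eval_pow, eval_X]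
      rw [Finset.sum_filter]
      refine Finset.sum_congr rfl fun i _ => ?_
      by_cases h : y i = 0
      · simp [h, zero_pow hppos.ne']
      · simp [h, ZMod.pow_card_sub_one_eq_one h]
    rw [e1, e2]
    exact x.2 j
  refine ⟨T, ?_, ?_, ?_⟩
  · intro i hi
    simp only [hT, Finset.mem_image, Finset.mem_filter] at hi
    obtain ⟨i', _, rfl⟩ := hi
    exact i'.2
  · obtain ⟨i, hi⟩ := Function.ne_iff.mp hy
    exact ⟨i.1, Finset.mem_image.mpr ⟨i, Finset.mem_filter.mpr ⟨Finset.mem_univ _, hi⟩, rfl⟩⟩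
  · intro j
    rw [← ZMod.intCast_zmod_eq_zero_iff_dvd]
    rw [Int.cast_sum]
    exact hkey j


lemma eta_prime {ι : Type} [DecidableEq ι] (p : ℕ) (hp : p.Prime) (s : Finset ι)
    (hs : 3 * p - 2 ≤ s.card) (a b : ι → ℤ) :
    ∃ T ⊆ s, T.Nonempty ∧ T.card ≤ p ∧
      (p : ℤ) ∣ ∑ i ∈ T, a i ∧ (p : ℤ) ∣ ∑ i ∈ T, b i := by
  have hp2 := hp.two_le
  obtain ⟨s', hs's, hs'card⟩ := Finset.exists_subset_card_eq hs
  obtain ⟨T, hTs', hTne, hdvd⟩ := olson_prime p 3 hp s'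
    (by omega : 3 * (p - 1) + 1 ≤ s'.card) ![a, b, fun _ => 1]
  have ha : (p : ℤ) ∣ ∑ i ∈ T, a i := by simpa using hdvd 0
  have hb : (p : ℤ) ∣ ∑ i ∈ T, b i := by simpa using hdvd 1
  have hone : (p : ℤ) ∣ (T.card : ℤ) := by simpa using hdvd 2
  have hcard : p ∣ T.card := Int.ofNat_dvd.mp (by exact_mod_cast hone)
  have hTcard_le : T.card ≤ 3 * p - 2 := hs'card ▸ Finset.card_le_card hTs'
  have hT1 : 1 ≤ T.card := Finset.card_pos.mpr hTne
  obtain ⟨k, hk⟩ := hcard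
  have hk1 : 1 ≤ k := Nat.pos_of_ne_zero fun h => by subst h; simp only [Nat.mul_zero] at hk; omega
  have hk3 : k < 3 := by
    by_contra h
    push_neg at h
    have : 3 * p ≤ p * k := by calc 3 * p = p * 3 := by ring
                                 _ ≤ p * k := Nat.mul_le_mul_left p h
    omega
  have hTsub : T ⊆ s := hTs'.trans hs's
  rcases (by omega : k = 1 ∨ k = 2) with rfl | rfl
  · exact ⟨T, hTsub, hTne, by omega, ha, hb⟩
  · -- T.card = 2p ; split it
    obtain ⟨T', hT'T, hT'card⟩ := Finset.exists_subset_card_eq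
      (by omega : 2 * p - 1 ≤ T.card)
    obtain ⟨U, hUT', hUne, hUdvd⟩ := olson_prime p 2 hp T'
      (by omega : 2 * (p - 1) + 1 ≤ T'.card) ![a, b]
    have hUa : (p : ℤ) ∣ ∑ i ∈ U, a i := by simpa using hUdvd 0
    have hUb : (p : ℤ) ∣ ∑ i ∈ U, b i := by simpa using hUdvd 1
    have hUT : U ⊆ T := hUT'.trans hT'T
    have hUcard_le : U.card ≤ 2 * p - 1 := hT'card ▸ Finset.card_le_card hUT'
    by_cases hU : U.card ≤ p
    · exact ⟨U, hUT.trans hTsub, hUne, hU, hUa, hUb⟩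
    · refine ⟨T \ U, (sdiff_subset).trans hTsub, ?_, ?_, ?_, ?_⟩
      · rw [← Finset.card_pos, Finset.card_sdiff_of_subset hUT]
        omega
      · rw [Finset.card_sdiff_of_subset hUT]
        omega
      · rw [Finset.sum_sdiff_eq_sub hUT]
        exact dvd_sub ha hUa
      · rw [Finset.sum_sdiff_eq_sub hUT]
        exact dvd_sub hb hUb


lemma extract_family {ι : Type} [DecidableEq ι] (p : ℕ) (hp : p.Prime) (a b : ι → ℤ) :
    ∀ (j : ℕ) (s : Finset ι), j * p + (2 * p - 1) ≤ s.card →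
    ∃ f : Fin j → Finset ι, (∀ i, f i ⊆ s) ∧ (∀ i, (f i).Nonempty) ∧
      (∀ i, (f i).card ≤ p) ∧
      (∀ i, (p : ℤ) ∣ ∑ k ∈ f i, a k ∧ (p : ℤ) ∣ ∑ k ∈ f i, b k) ∧
      ∀ i₁ i₂, i₁ ≠ i₂ → Disjoint (f i₁) (f i₂) := by
  intro j
  induction j with
  | zero =>
    intro s _
    exact ⟨fun i => i.elim0, fun i => i.elim0, fun i => i.elim0, fun i => i.elim0,
      fun i => i.elim0, fun i₁ => i₁.elim0⟩
  | succ j ih =>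
    intro s hcard
    have hp2 := hp.two_le
    obtain ⟨f, hfs, hfne, hfcard, hfdvd, hfdisj⟩ := ih s (by
      obtain ⟨t, ht⟩ : ∃ t, j * p = t := ⟨_, rfl⟩
      have e1 : (j + 1) * p = j * p + p := by ring
      rw [e1, ht] at hcard
      rw [ht]
      omega)
    set U := Finset.univ.biUnion f with hU
    have hUs : U ⊆ s := Finset.biUnion_subset.mpr fun i _ => hfs i
    have hUcard : U.card ≤ j * p := by
      refine le_trans (Finset.card_biUnion_le) ?_
      calc ∑ i : Fin j, (f i).card ≤ ∑ _i : Fin j, p := Finset.sum_le_sum fun i _ => hfcard i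
        _ = j * p := by simp [mul_comm]
    have hrem : 3 * p - 2 ≤ (s \ U).card := by
      have h1 : (s \ U).card = s.card - U.card := Finset.card_sdiff_of_subset hUs
      obtain ⟨t, ht⟩ : ∃ t, j * p = t := ⟨_, rfl⟩
      have e1 : (j + 1) * p = j * p + p := by ring
      rw [e1, ht] at hcard
      rw [ht] at hUcard
      omega
    obtain ⟨T, hTsub, hTne, hTcard, hTa, hTb⟩ := eta_prime p hp (s \ U) hrem a b
    have hdT : ∀ i, Disjoint T (f i) := by
      intro i
      refine Finset.disjoint_left.mpr fun k hk hk' => ?_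
      exact (Finset.mem_sdiff.mp (hTsub hk)).2
        (Finset.mem_biUnion.mpr ⟨i, Finset.mem_univ _, hk'⟩)
    refine ⟨Fin.cons T f, ?_, ?_, ?_, ?_, ?_⟩
    · intro i
      refine Fin.cases ?_ ?_ i
      · simpa using hTsub.trans sdiff_subset
      · intro i'; simpa using hfs i'
    · intro i
      refine Fin.cases ?_ ?_ i
      · simpa using hTne
      · intro i'; simpa using hfne i'
    · intro i
      refine Fin.cases ?_ ?_ i
      · simpa using hTcard
      · intro i'; simpa using hfcard i'
    · intro i
      refine Fin.cases ?_ ?_ i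
      · simpa using ⟨hTa, hTb⟩
      · intro i'; simpa using hfdvd i'
    · intro i₁ i₂ hne
      rcases Fin.eq_zero_or_eq_succ i₁ with rfl | ⟨i₁', rfl⟩ <;>
        rcases Fin.eq_zero_or_eq_succ i₂ with rfl | ⟨i₂', rfl⟩
      · exact absurd rfl hne
      · simp only [Fin.cons_succ, Fin.cons_zero]
        exact hdT i₂'
      · simp only [Fin.cons_succ, Fin.cons_zero]
        exact (hdT i₁').symm
      · simp only [Fin.cons_succ]
        exact hfdisj i₁' i₂' fun h => hne (by rw [h])


lemma main_int : ∀ (d : ℕ), 1 ≤ d → ∀ {ι : Type} [DecidableEq ι] (s : Finset ι) (a b : ι → ℤ),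
    2 * d - 1 ≤ s.card →
    ∃ T ⊆ s, T.Nonempty ∧ (d : ℤ) ∣ ∑ i ∈ T, a i ∧ (d : ℤ) ∣ ∑ i ∈ T, b i := by
  intro d
  induction d using Nat.strong_induction_on with
  | _ d ih =>
  intro hd ι _ s a b hcard
  rcases eq_or_lt_of_le hd with h1 | h2
  · -- d = 1
    obtain ⟨i, hi⟩ := Finset.card_pos.mp (by omega : 0 < s.card)
    exact ⟨{i}, Finset.singleton_subset_iff.mpr hi, Finset.singleton_nonempty i,
      by rw [← h1]; simpa using one_dvd _, by rw [← h1]; simpa using one_dvd _⟩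
  by_cases hdp : d.Prime
  · obtain ⟨T, hTs, hTne, h⟩ := olson_prime d 2 hdp s
      (by omega : 2 * (d - 1) + 1 ≤ s.card) ![a, b]
    exact ⟨T, hTs, hTne, by simpa using h 0, by simpa using h 1⟩
  · -- composite
    set p := d.minFac with hpdef
    have hpp : p.Prime := Nat.minFac_prime (by omega)
    have hp2 := hpp.two_le
    have hpd : p ∣ d := Nat.minFac_dvd d
    obtain ⟨m, hdm⟩ := hpd
    have hm1 : 1 ≤ m := Nat.pos_of_ne_zero fun h => by
      rw [h, Nat.mul_zero] at hdm; omega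
    have hmd : m < d := by
      have h2m : m < 2 * m := by omega
      have h2p : 2 * m ≤ p * m := Nat.mul_le_mul_right m hp2
      omega
    obtain ⟨m', rfl⟩ : ∃ m', m = m' + 1 := ⟨m - 1, by omega⟩
    -- arithmetic facts
    have hprod : 2 * m' * p + 2 * p = 2 * (p * (m' + 1)) := by ring
    obtain ⟨t, ht⟩ : ∃ t, 2 * m' * p = t := ⟨_, rfl⟩
    obtain ⟨D, hD⟩ : ∃ D, 2 * (p * (m' + 1)) = D := ⟨_, rfl⟩
    rw [ht, hD] at hprod
    have hcard' : D - 1 ≤ s.card := by rw [← hD, ← hdm]; omega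
    -- extract 2m-2 sets of size ≤ p
    obtain ⟨f, hfs, hfne, hfcardle, hfdvd, hfdisj⟩ :=
      extract_family p hpp a b (2 * m') s (by
        have : 2 * m' * p = t := ht
        omega)
    set U := Finset.univ.biUnion f with hUdef
    have hUs : U ⊆ s := Finset.biUnion_subset.mpr fun i _ => hfs i
    have hUcard : U.card ≤ 2 * m' * p := by
      refine le_trans (Finset.card_biUnion_le) ?_
      calc ∑ i : Fin (2 * m'), (f i).card ≤ ∑ _i : Fin (2 * m'), p :=
            Finset.sum_le_sum fun i _ => hfcardle i
        _ = 2 * m' * p := by simp [mul_comm]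
    have hrem : 2 * (p - 1) + 1 ≤ (s \ U).card := by
      have hsd : (s \ U).card = s.card - U.card := Finset.card_sdiff_of_subset hUs
      rw [ht] at hUcard
      omega
    obtain ⟨T₀, hT₀s, hT₀ne, h₀⟩ := olson_prime p 2 hpp (s \ U) hrem ![a, b]
    have h₀a : (p : ℤ) ∣ ∑ i ∈ T₀, a i := by simpa using h₀ 0
    have h₀b : (p : ℤ) ∣ ∑ i ∈ T₀, b i := by simpa using h₀ 1
    -- combine into family of 2m-1 sets
    set F : Fin (2 * m' + 1) → Finset ι := Fin.snoc f T₀ with hFdef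
    have hFs : ∀ i, F i ⊆ s := by
      intro i
      rcases Fin.eq_castSucc_or_eq_last i with ⟨i', rfl⟩ | rfl
      · rw [hFdef]; rw [Fin.snoc_castSucc]; exact hfs i'
      · rw [hFdef]; rw [Fin.snoc_last]; exact hT₀s.trans sdiff_subset
    have hFne : ∀ i, (F i).Nonempty := by
      intro i
      rcases Fin.eq_castSucc_or_eq_last i with ⟨i', rfl⟩ | rfl
      · rw [hFdef]; rw [Fin.snoc_castSucc]; exact hfne i'
      · rw [hFdef]; rw [Fin.snoc_last]; exact hT₀ne
    have hFdvd : ∀ i, (p : ℤ) ∣ ∑ k ∈ F i, a k ∧ (p : ℤ) ∣ ∑ k ∈ F i, b k := by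
      intro i
      rcases Fin.eq_castSucc_or_eq_last i with ⟨i', rfl⟩ | rfl
      · rw [hFdef]; rw [Fin.snoc_castSucc]; exact hfdvd i'
      · rw [hFdef]; rw [Fin.snoc_last]; exact ⟨h₀a, h₀b⟩
    have hdT : ∀ i, Disjoint T₀ (f i) := by
      intro i
      refine Finset.disjoint_left.mpr fun k hk hk' => ?_
      exact (Finset.mem_sdiff.mp (hT₀s hk)).2
        (Finset.mem_biUnion.mpr ⟨i, Finset.mem_univ _, hk'⟩)
    have hFdisj : ∀ i₁ i₂, i₁ ≠ i₂ → Disjoint (F i₁) (F i₂) := by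
      intro i₁ i₂ hne
      rcases Fin.eq_castSucc_or_eq_last i₁ with ⟨i₁', rfl⟩ | rfl <;>
        rcases Fin.eq_castSucc_or_eq_last i₂ with ⟨i₂', rfl⟩ | rfl
      · simp only [hFdef, Fin.snoc_castSucc]
        exact hfdisj i₁' i₂' fun h => hne (by rw [h])
      · simp only [hFdef, Fin.snoc_castSucc, Fin.snoc_last]
        exact (hdT i₁').symm
      · simp only [hFdef, Fin.snoc_castSucc, Fin.snoc_last]
        exact hdT i₂'
      · exact absurd rfl hne
    -- divide the partial sums by p
    have hAex : ∀ i, ∃ A : ℤ, ∑ k ∈ F i, a k = (p : ℤ) * A := fun i => (hFdvd i).1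
    have hBex : ∀ i, ∃ B : ℤ, ∑ k ∈ F i, b k = (p : ℤ) * B := fun i => (hFdvd i).2
    choose A hA using hAex
    choose B hB using hBex
    -- apply the induction hypothesis at m
    obtain ⟨J, _, hJne, hJA, hJB⟩ := ih (m' + 1) hmd hm1
      (Finset.univ : Finset (Fin (2 * m' + 1))) A B
      (by simp only [Finset.card_univ, Fintype.card_fin]; omega)
    refine ⟨J.biUnion F, ?_, ?_, ?_, ?_⟩
    · exact Finset.biUnion_subset.mpr fun i _ => hFs i
    · obtain ⟨i, hi⟩ := hJne
      obtain ⟨k, hk⟩ := hFne i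
      exact ⟨k, Finset.mem_biUnion.mpr ⟨i, hi, hk⟩⟩
    · have hsum : ∑ k ∈ J.biUnion F, a k = ∑ i ∈ J, ∑ k ∈ F i, a k :=
        Finset.sum_biUnion fun x _ y _ hxy => hFdisj x y hxy
      obtain ⟨w, hw⟩ := hJA
      refine ⟨w, ?_⟩
      rw [hsum, hdm]
      have e : ∑ i ∈ J, ∑ k ∈ F i, a k = (p : ℤ) * ∑ i ∈ J, A i := by
        rw [Finset.mul_sum]; exact Finset.sum_congr rfl fun i _ => hA i
      rw [e, hw]
      push_cast
      ring
    · have hsum : ∑ k ∈ J.biUnion F, b k = ∑ i ∈ J, ∑ k ∈ F i, b k :=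
        Finset.sum_biUnion fun x _ y _ hxy => hFdisj x y hxy
      obtain ⟨w, hw⟩ := hJB
      refine ⟨w, ?_⟩
      rw [hsum, hdm]
      have e : ∑ i ∈ J, ∑ k ∈ F i, b k = (p : ℤ) * ∑ i ∈ J, B i := by
        rw [Finset.mul_sum]; exact Finset.sum_congr rfl fun i _ => hB i
      rw [e, hw]
      push_cast
      ring


/-- Every sequence of `2d - 1` elements of `C_d × C_d = (ZMod d)²`, `d ≥ 1`,
contains a nonempty subsequence whose sum is zero; i.e. the Davenport constant
of `(ZMod d)²` is at most `2d - 1`. -/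
theorem davenport_zmod_sq_le (d : ℕ) (hd : 1 ≤ d)
    (g : Fin (2 * d - 1) → ZMod d × ZMod d) :
    ∃ S : Finset (Fin (2 * d - 1)), S.Nonempty ∧ ∑ i ∈ S, g i = 0 := by
  haveI : NeZero d := ⟨by omega⟩
  obtain ⟨T, _, hTne, ha, hb⟩ := main_int d hd (Finset.univ : Finset (Fin (2 * d - 1)))
    (fun i => ((g i).1.val : ℤ)) (fun i => ((g i).2.val : ℤ))
    (by simp)
  refine ⟨T, hTne, ?_⟩
  have h1 : (∑ i ∈ T, g i).1 = 0 := by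
    rw [Prod.fst_sum]
    have hcongr : ∀ i ∈ T, (g i).1 = ((((g i).1.val : ℤ) : ZMod d)) := by
      intro i _
      push_cast
      rw [ZMod.natCast_val, ZMod.cast_id]
    rw [Finset.sum_congr rfl hcongr, ← Int.cast_sum]
    exact (ZMod.intCast_zmod_eq_zero_iff_dvd _ d).mpr ha
  have h2 : (∑ i ∈ T, g i).2 = 0 := by
    rw [Prod.snd_sum]
    have hcongr : ∀ i ∈ T, (g i).2 = ((((g i).2.val : ℤ) : ZMod d)) := by
      intro i _
      push_cast
      rw [ZMod.natCast_val, ZMod.cast_id]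
    rw [Finset.sum_congr rfl hcongr, ← Int.cast_sum]
    exact (ZMod.intCast_zmod_eq_zero_iff_dvd _ d).mpr hb
  rw [Prod.ext_iff]
  exact ⟨by simpa using h1, by simpa using h2⟩
end

section
/- Let n = n_1 + n_2 with n_1, n_2 \ge 3, and let G = S_{n_1} \times S_{n_2} act on \{1,...,n\} by permuting within the two blocks, and diagonally on triples \{1,...,n\}^3. Then the number of G-orbits on \{1,...,n\}^3 is exactly 22. -/
/-- The group `S_{n₁} × S_{n₂}` acting on `{1,…,n₁} ⊔ {1,…,n₂}` by permuting
the two blocks separately. -/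
instance twoBlockPermAction (n₁ n₂ : ℕ) :
    MulAction (Equiv.Perm (Fin n₁) × Equiv.Perm (Fin n₂)) (Fin n₁ ⊕ Fin n₂) where
  smul σ x := Sum.map σ.1 σ.2 x
  one_smul x := by cases x <;> rfl
  mul_smul σ τ x := by cases x <;> rfl

/-- Any two tuples with the same equality pattern are related by a permutation. -/
theorem exists_perm_of_pattern {ι α : Type*} [Finite α] (x y : ι → α)
    (h : ∀ i j, x i = x j ↔ y i = y j) :
    ∃ σ : Equiv.Perm α, ∀ i, σ (x i) = y i := by
  classical
  let F : {a // ∃ i, x i = a} → {b // ∃ j, y j = b} :=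
    fun a => ⟨y a.2.choose, a.2.choose, rfl⟩
  let G : {b // ∃ j, y j = b} → {a // ∃ i, x i = a} :=
    fun b => ⟨x b.2.choose, b.2.choose, rfl⟩
  have hGF : ∀ a, G (F a) = a := by
    rintro ⟨a, ha⟩
    have h1 : x ha.choose = a := ha.choose_spec
    have h2 : y (⟨y ha.choose, ha.choose, rfl⟩ : {b // ∃ j, y j = b}).2.choose
        = y ha.choose :=
      (⟨y ha.choose, ha.choose, rfl⟩ : {b // ∃ j, y j = b}).2.choose_spec
    apply Subtype.ext
    show x _ = a
    rw [(h _ _).2 h2, h1]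
  have hFG : ∀ b, F (G b) = b := by
    rintro ⟨b, hb⟩
    have h1 : y hb.choose = b := hb.choose_spec
    have h2 : x (⟨x hb.choose, hb.choose, rfl⟩ : {a // ∃ i, x i = a}).2.choose
        = x hb.choose :=
      (⟨x hb.choose, hb.choose, rfl⟩ : {a // ∃ i, x i = a}).2.choose_spec
    apply Subtype.ext
    show y _ = b
    rw [(h _ _).1 h2, h1]
  let e : {a // ∃ i, x i = a} ≃ {b // ∃ j, y j = b} := ⟨F, G, hGF, hFG⟩
  refine ⟨e.extendSubtype, fun i => ?_⟩
  rw [Equiv.extendSubtype_apply_of_mem e (x i) ⟨i, rfl⟩]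
  show y (⟨x i, i, rfl⟩ : {a // ∃ i', x i' = a}).2.choose = y i
  exact (h _ _).1 (⟨x i, i, rfl⟩ : {a // ∃ i', x i' = a}).2.choose_spec

/-- Two triples with the same pattern are related by a block permutation. -/
theorem exists_blockperm_of_pattern {n₁ n₂ : ℕ} (x y : Fin 3 → Fin n₁ ⊕ Fin n₂)
    (hp : ∀ i j, x i = x j ↔ y i = y j)
    (hl : ∀ i, (x i).isLeft = (y i).isLeft) :
    ∃ σ : Equiv.Perm (Fin n₁) × Equiv.Perm (Fin n₂),
      ∀ i, Sum.map σ.1 σ.2 (x i) = y i := by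
  have hr : ∀ i, (x i).isRight = (y i).isRight := by
    intro i
    have h := hl i
    cases hx : x i <;> cases hy : y i <;> rw [hx, hy] at h <;> simp_all [hx, hy]
  obtain ⟨σ₁, hσ₁⟩ := exists_perm_of_pattern
    (fun i : {i : Fin 3 // (x i).isLeft} => (x i.1).getLeft i.2)
    (fun i : {i : Fin 3 // (x i).isLeft} => (y i.1).getLeft ((hl i.1) ▸ i.2))
    (by
      rintro ⟨i, hi⟩ ⟨j, hj⟩
      show (x i).getLeft hi = (x j).getLeft hj ↔ _
      constructor
      · intro h
        have hxx : x i = x j := by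
          rw [← Sum.inl_getLeft (x i) hi, ← Sum.inl_getLeft (x j) hj, h]
        have := (hp i j).1 hxx
        show (y i).getLeft _ = (y j).getLeft _
        rw [Sum.getLeft_eq_iff, this, Sum.inl_getLeft]
      · intro h
        have h' : (y i).getLeft ((hl i) ▸ hi) = (y j).getLeft ((hl j) ▸ hj) := h
        have hyy : y i = y j := by
          rw [← Sum.inl_getLeft (y i) ((hl i) ▸ hi), ← Sum.inl_getLeft (y j) ((hl j) ▸ hj), h']
        have := (hp i j).2 hyy
        rw [Sum.getLeft_eq_iff, this, Sum.inl_getLeft])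
  obtain ⟨σ₂, hσ₂⟩ := exists_perm_of_pattern
    (fun i : {i : Fin 3 // (x i).isRight} => (x i.1).getRight i.2)
    (fun i : {i : Fin 3 // (x i).isRight} => (y i.1).getRight ((hr i.1) ▸ i.2))
    (by
      rintro ⟨i, hi⟩ ⟨j, hj⟩
      show (x i).getRight hi = (x j).getRight hj ↔ _
      constructor
      · intro h
        have hxx : x i = x j := by
          rw [← Sum.inr_getRight (x i) hi, ← Sum.inr_getRight (x j) hj, h]
        have := (hp i j).1 hxx
        show (y i).getRight _ = (y j).getRight _
        rw [Sum.getRight_eq_iff, this, Sum.inr_getRight]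
      · intro h
        have h' : (y i).getRight ((hr i) ▸ hi) = (y j).getRight ((hr j) ▸ hj) := h
        have hyy : y i = y j := by
          rw [← Sum.inr_getRight (y i) ((hr i) ▸ hi), ← Sum.inr_getRight (y j) ((hr j) ▸ hj), h']
        have := (hp i j).2 hyy
        rw [Sum.getRight_eq_iff, this, Sum.inr_getRight])
  refine ⟨(σ₁, σ₂), fun i => ?_⟩
  cases hxi : x i with
  | inl a =>
    have hi : (x i).isLeft := by rw [hxi]; rfl
    have h1 : σ₁ ((x i).getLeft hi) = (y i).getLeft ((hl i) ▸ hi) := hσ₁ ⟨i, hi⟩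
    have ha : (x i).getLeft hi = a := by rw [Sum.getLeft_eq_iff]; exact hxi
    rw [ha] at h1
    rw [Sum.map_inl, h1, Sum.inl_getLeft]
  | inr a =>
    have hi : (x i).isRight := by rw [hxi]; rfl
    have h1 : σ₂ ((x i).getRight hi) = (y i).getRight ((hr i) ▸ hi) := hσ₂ ⟨i, hi⟩
    have ha : (x i).getRight hi = a := by rw [Sum.getRight_eq_iff]; exact hxi
    rw [ha] at h1
    rw [Sum.map_inr, h1, Sum.inr_getRight]

abbrev InvT := (Fin 3 → Fin 3 → Bool) × (Fin 3 → Bool)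

def ValidInv (z : InvT) : Prop :=
  (∀ i, z.1 i i = true) ∧ (∀ i j, z.1 i j = z.1 j i) ∧
  (∀ i j k, z.1 i j = true → z.1 j k = true → z.1 i k = true) ∧
  (∀ i j, z.1 i j = true → z.2 i = z.2 j)

instance : DecidablePred ValidInv := fun z => by unfold ValidInv; infer_instance

set_option maxRecDepth 10000 in
theorem card_validInv : Nat.card {z : InvT // ValidInv z} = 22 := by
  rw [Nat.card_eq_fintype_card]; decide

/-- Let `n = n₁ + n₂` with `n₁, n₂ ≥ 3`, and let `G = S_{n₁} × S_{n₂}` act on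
`{1,…,n}` by permuting within the two blocks, and diagonally on triples.
Then the number of `G`-orbits on triples is exactly `22`. -/
theorem card_orbits_triples_two_types (n₁ n₂ : ℕ) (h₁ : 3 ≤ n₁) (h₂ : 3 ≤ n₂) :
    Nat.card (Quotient (MulAction.orbitRel (Equiv.Perm (Fin n₁) × Equiv.Perm (Fin n₂))
        (Fin 3 → Fin n₁ ⊕ Fin n₂))) = 22 := by
  classical
  set G := Equiv.Perm (Fin n₁) × Equiv.Perm (Fin n₂)
  set α := (Fin 3 → Fin n₁ ⊕ Fin n₂)
  set Φ : α → InvT := fun x =>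
    (fun i j => decide (x i = x j), fun i => (x i).isLeft) with hΦ
  have hsmul : ∀ (σ : G) (x : α) (i : Fin 3), (σ • x) i = Sum.map σ.1 σ.2 (x i) :=
    fun σ x i => rfl
  -- same invariant implies same orbit
  have key : ∀ x y : α, Φ x = Φ y → y ∈ MulAction.orbit G x := by
    intro x y hxy
    have hp : ∀ i j, x i = x j ↔ y i = y j := by
      intro i j
      have h := congrFun (congrFun (congrArg Prod.fst hxy) i) j
      simp only [hΦ] at h
      exact decide_eq_decide.1 h
    have hl : ∀ i, (x i).isLeft = (y i).isLeft := fun i =>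
      congrFun (congrArg Prod.snd hxy) i
    obtain ⟨σ, hσ⟩ := exists_blockperm_of_pattern x y hp hl
    exact ⟨σ, funext fun i => (hsmul σ x i).trans (hσ i)⟩
  -- same orbit implies same invariant
  have inv : ∀ (σ : G) (x : α), Φ (σ • x) = Φ x := by
    intro σ x
    have hinj : Function.Injective (Sum.map σ.1 σ.2) :=
      Sum.map_injective.2 ⟨σ.1.injective, σ.2.injective⟩
    refine Prod.ext ?_ ?_
    · funext i j
      simp only [hΦ, hsmul]
      exact decide_eq_decide.2 ⟨fun h => hinj h, fun h => h ▸ rfl⟩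
    · funext i
      simp only [hΦ, hsmul, Sum.isLeft_map]
  -- the orbit relation is the kernel of Φ
  have hker : MulAction.orbitRel G α = Setoid.ker Φ := by
    apply Setoid.ext
    intro x y
    rw [MulAction.orbitRel_apply]
    constructor
    · rintro ⟨σ, rfl⟩
      exact inv σ y
    · intro h
      exact key y x h.symm
  rw [hker, Nat.card_congr (Setoid.quotientKerEquivRange Φ)]
  -- range Φ = valid invariants
  have hrange : Set.range Φ = {z | ValidInv z} := by
    ext z
    constructor
    · rintro ⟨x, rfl⟩
      refine ⟨fun i => by simp [hΦ], fun i j => ?_, fun i j k hij hjk => ?_, fun i j hij => ?_⟩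
      · simp only [hΦ]
        exact decide_eq_decide.2 eq_comm
      · simp only [hΦ] at *
        exact decide_eq_true ((of_decide_eq_true hij).trans (of_decide_eq_true hjk))
      · simp only [hΦ] at *
        rw [of_decide_eq_true hij]
    · rintro ⟨hrefl, hsymm, htrans, hcomp⟩
      set r : Fin 3 → Fin 3 := fun i =>
        if z.1 i 0 then 0 else if z.1 i 1 then 1 else 2 with hr
      have hri : ∀ i, z.1 i (r i) = true := by
        intro i
        rw [hr]
        dsimp only
        split_ifs with h0 h1
        · exact h0
        · exact h1
        · fin_cases i
          · exact absurd (hrefl 0) h0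
          · exact absurd (hrefl 1) h1
          · exact hrefl 2
      have hreq : ∀ i j, z.1 i j = true → r i = r j := by
        intro i j hij
        have hk : ∀ k, z.1 i k = z.1 j k := by
          intro k
          by_cases h : z.1 j k = true
          · rw [h]; exact htrans i j k hij h
          · rw [Bool.eq_false_iff.2 h, Bool.eq_false_iff]
            intro hik
            exact h (htrans j i k ((hsymm i j) ▸ hij) hik)
        rw [hr]
        simp only [hk]
      have hzij : ∀ i j, r i = r j → z.1 i j = true := by
        intro i j hij
        have hb := hri j
        rw [← hij] at hb
        exact htrans i (r i) j (hri i) ((hsymm j (r i)) ▸ hb)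
      refine ⟨fun i => if z.2 i then Sum.inl (Fin.castLE h₁ (r i))
        else Sum.inr (Fin.castLE h₂ (r i)), ?_⟩
      refine Prod.ext ?_ ?_
      · funext i j
        simp only [hΦ]
        by_cases hzz : z.1 i j = true
        · rw [hzz]
          exact decide_eq_true (by rw [hreq i j hzz, hcomp i j hzz])
        · rw [Bool.eq_false_iff.2 hzz]
          simp only [decide_eq_false_iff_not]
          intro heq
          apply hzz
          by_cases h2i : z.2 i = true <;> by_cases h2j : z.2 j = true <;>
            simp only [h2i, h2j, if_true, if_false, Bool.false_eq_true] at heq <;>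
            first
            | (exact hzij i j (Fin.castLE_injective _ (Sum.inl.inj heq)))
            | (exact hzij i j (Fin.castLE_injective _ (Sum.inr.inj heq)))
            | (exact absurd heq (by simp))
      · funext i
        simp only [hΦ]
        by_cases h2 : z.2 i = true <;> simp [h2]
  rw [hrange]
  exact card_validInv
end
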